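/- arXiv:1905.09609 — 2 statements merged into one kernel-verified Lean document; each statement's English description precedes it below -/
import Mathlib

section
/- There exists a computable function u₂ : ℕ → ℕ such that for every a ∈ I: u₂(a) ∈ I and H_{u₂(a)} = ℕ \ H_a; that is, the coded family {H_a | a ∈ I} is uniformly closed under complementation. -/
noncomputable section

/-- The `e`-th partial recursive function `ℕ ⇀ ℕ`. -/
def phi (e : ℕ) : ℕ →. ℕ := (Denumerable.ofNat Nat.Partrec.Code e).eval

/-- The monotone operator `Ψ₀`. -/
def Psi0 : Set ℕ →o Set ℕ where
  toFun J := {a | (∃ e, a = Nat.pair 0 e) ∨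
    ∃ e, a = Nat.pair 1 e ∧ ∀ k, ∃ v ∈ phi e k, v ∈ J}
  monotone' := by
    intro J J' hJ a ha
    rcases ha with ⟨e, he⟩ | ⟨e, he, hk⟩
    · exact Or.inl ⟨e, he⟩
    · refine Or.inr ⟨e, he, fun k => ?_⟩
      obtain ⟨v, hv, hvJ⟩ := hk k
      exact ⟨v, hv, hJ hvJ⟩

/-- `I`, the least fixed point of `Ψ₀`. -/
def Iset : Set ℕ := OrderHom.lfp Psi0

/-- The transfinite stages `I_ξ`. -/
def Istage : Ordinal → Set ℕ :=
  WellFounded.fix Ordinal.lt_wf fun ξ ih =>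
    if ξ = 0 then {a | ∃ e, a = Nat.pair 0 e}
    else {a | ∃ e, a = Nat.pair 1 e ∧
      ∀ k, ∃ v ∈ phi e k, ∃ η, ∃ hη : η < ξ, v ∈ ih η hη}

/-- The norm `‖a‖` of `a ∈ I`: the least ordinal `ξ` with `a ∈ I_ξ`. -/
def Inorm (a : ℕ) : Ordinal := sInf {ξ | a ∈ Istage ξ}

/-- The monotone operator `Ψ₁`. -/
def Psi1 : Set (ℕ × ℕ) →o Set (ℕ × ℕ) where
  toFun A := {p | (∃ e, p.1 = Nat.pair 0 e ∧ p.2 = e) ∨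
    ∃ e, p.1 = Nat.pair 1 e ∧ ∃ t, ∀ s, ∃ v ∈ phi e (Nat.pair t s), (v, p.2) ∈ A}
  monotone' := by
    intro A A' hA p hp
    rcases hp with ⟨e, he, hx⟩ | ⟨e, he, t, ht⟩
    · exact Or.inl ⟨e, he, hx⟩
    · refine Or.inr ⟨e, he, t, fun s => ?_⟩
      obtain ⟨v, hv, hvA⟩ := ht s
      exact ⟨v, hv, hA hvA⟩

/-- `Hp`, the least fixed point of `Ψ₁`. -/
def Hp : Set (ℕ × ℕ) := OrderHom.lfp Psi1

/-- `H_a`, the `a`-section of `Hp`. -/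
def Hset (a : ℕ) : Set ℕ := {x | (a, x) ∈ Hp}

/-- The monotone operator `Φ_ψ` associated with the positive formula `ψ`. -/
def PhiPsi : Set ℕ →o Set ℕ where
  toFun R := {y | ∃ a x e, y = Nat.pair a x ∧
    ((a = Nat.pair 0 e ∧ x = e) ∨
     (a = Nat.pair 1 e ∧ ∃ t, ∀ s, ∃ v ∈ phi e (Nat.pair t s), Nat.pair v x ∈ R))}
  monotone' := by
    intro R R' hR y hy
    obtain ⟨a, x, e, hy, hcase⟩ := hy
    refine ⟨a, x, e, hy, ?_⟩
    rcases hcase with h | ⟨he, t, ht⟩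
    · exact Or.inl h
    · refine Or.inr ⟨he, t, fun s => ?_⟩
      obtain ⟨v, hv, hvR⟩ := ht s
      exact ⟨v, hv, hR hvR⟩


/-!
The complement of `H_⟨0,e⟩ = {e}` is `⋃ t, ⋂ s, {if t = e then s else t}`, a union of
intersections of singletons, hence of the form `H_⟨1,c⟩`. For `a = ⟨1,e⟩`, De Morgan gives
`(⋃ t, ⋂ s, H_{φ_e⟨t,s⟩})ᶜ = ⋂ t, ⋃ s, H_{u₂ (φ_e⟨t,s⟩)}`, which after padding with dummy
indices is again `⋃ t', ⋂ t, H_⟨1,d_t⟩` with `H_⟨1,d_t⟩ = ⋃ s, ⋂ s', H_{u₂ (φ_e⟨t,s⟩)}`.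
Since the indices `c`, `d_t` refer to `u₂` itself, `u₂` is obtained from Kleene's recursion
theorem, and the two properties are then proved together by induction along `I`.
-/

open Nat.Partrec (Code)

theorem phi_encode (c : Code) : phi (Encodable.encode c) = c.eval := by
  simp [phi]

theorem partrec₂_phi : Partrec₂ phi :=
  Code.eval_part.comp ((Computable.ofNat Code).comp Computable.fst) Computable.snd

theorem exists_primrec_index {α : Type*} [Primcodable α] {f : α → ℕ →. ℕ} (hf : Partrec₂ f) :
    ∃ s : α → ℕ, Primrec s ∧ ∀ a, phi (s a) = f a := by
  have hg : Partrec fun n : ℕ =>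
      (Encodable.decode (α := α) n.unpair.1 : Part α).bind fun a => f a n.unpair.2 :=
    (Computable.ofOption (Computable.decode.comp (Computable.fst.comp Computable.unpair))).bind
      (hf.comp Computable.snd (Computable.snd.comp (Computable.unpair.comp Computable.fst)))
  obtain ⟨c, hc⟩ := Code.exists_code.1 (Partrec.nat_iff.1 hg)
  refine ⟨fun a => Encodable.encode (c.curry (Encodable.encode a)),
    Primrec.encode.comp (Code.primrec₂_curry.comp (Primrec.const c) Primrec.encode), fun a => ?_⟩
  ext1 k
  simp [phi_encode, Code.eval_curry, hc]

theorem exists_index_phi_eq_some {F : ℕ → ℕ → ℕ} (hF : Computable₂ F) :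
    ∃ m, phi m = fun a => Part.some (F m a) := by
  obtain ⟨c, hc⟩ := Code.fixed_point₂
    (f := fun c a => Part.some (F (Encodable.encode c) a))
    (Computable₂.partrec₂ (hF.comp (Computable.encode.comp Computable.fst) Computable.snd))
  exact ⟨Encodable.encode c, by rw [phi_encode, hc]⟩

theorem mem_Iset_iff {a : ℕ} : a ∈ Iset ↔ a ∈ Psi0 Iset := by
  rw [Iset, OrderHom.map_lfp]

theorem pair_zero_mem_Iset (e : ℕ) : Nat.pair 0 e ∈ Iset :=
  mem_Iset_iff.2 (Or.inl ⟨e, rfl⟩)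

theorem pair_one_mem_Iset {e : ℕ} {g : ℕ → ℕ → ℕ} (hg : ∀ t s, g t s ∈ phi e (Nat.pair t s))
    (hgI : ∀ t s, g t s ∈ Iset) : Nat.pair 1 e ∈ Iset := by
  refine mem_Iset_iff.2 (Or.inr ⟨e, rfl, fun k => ?_⟩)
  rw [← Nat.pair_unpair k]
  exact ⟨_, hg _ _, hgI _ _⟩

theorem Iset_induction {P : ℕ → Prop} (zero : ∀ e, P (Nat.pair 0 e))
    (one : ∀ e (v : ℕ → ℕ), (∀ k, v k ∈ phi e k) → (∀ k, v k ∈ Iset ∧ P (v k)) →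
      P (Nat.pair 1 e)) :
    ∀ a ∈ Iset, P a := by
  suffices Iset ⊆ {a | a ∈ Iset ∧ P a} from fun a ha => (this ha).2
  refine OrderHom.lfp_le _ fun a ha => ⟨?_, ?_⟩
  · exact mem_Iset_iff.2 (Psi0.monotone (fun _ hb => hb.1) ha)
  · obtain ⟨e, rfl⟩ | ⟨e, rfl, hk⟩ := ha
    · exact zero e
    · choose v hv hvP using hk
      exact one e v hv hvP

theorem mem_Hp_iff {p : ℕ × ℕ} : p ∈ Hp ↔ p ∈ Psi1 Hp := by
  rw [Hp, OrderHom.map_lfp]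

theorem Hset_pair_zero (e : ℕ) : Hset (Nat.pair 0 e) = {e} := by
  ext x
  change (_, x) ∈ Hp ↔ _
  rw [mem_Hp_iff]
  simp [Psi1, eq_comm]

theorem Hset_pair_one (e : ℕ) :
    Hset (Nat.pair 1 e) = {x | ∃ t, ∀ s, ∃ v ∈ phi e (Nat.pair t s), x ∈ Hset v} := by
  ext x
  change (_, x) ∈ Hp ↔ _
  rw [mem_Hp_iff]
  simp [Psi1, Hset]

theorem Hset_pair_one_of_mem {e : ℕ} {g : ℕ → ℕ → ℕ} (hg : ∀ t s, g t s ∈ phi e (Nat.pair t s)) :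
    Hset (Nat.pair 1 e) = ⋃ t, ⋂ s, Hset (g t s) := by
  ext x
  simp only [Hset_pair_one, Set.mem_ofPred_eq, Set.mem_iUnion, Set.mem_iInter]
  refine exists_congr fun t => forall_congr' fun s => ⟨?_, fun hx => ⟨_, hg t s, hx⟩⟩
  rintro ⟨v, hv, hx⟩
  rwa [Part.mem_unique hv (hg t s)] at hx

theorem exists_u2_spec : ∃ u₂ : ℕ → ℕ, Computable u₂ ∧
    (∀ e, ∃ c, u₂ (Nat.pair 0 e) = Nat.pair 1 c ∧
      ∀ t s, Nat.pair 0 (if t = e then s else t) ∈ phi c (Nat.pair t s)) ∧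
    (∀ e, ∃ c, u₂ (Nat.pair 1 e) = Nat.pair 1 c ∧ ∀ t, ∃ d,
      (∀ t', Nat.pair 1 d ∈ phi c (Nat.pair t' t)) ∧
      ∀ s s', phi d (Nat.pair s s') = (phi e (Nat.pair t s)).map u₂) := by
  have hfst : Primrec fun k : ℕ => k.unpair.1 := Primrec.fst.comp Primrec.unpair
  have hsnd : Primrec fun k : ℕ => k.unpair.2 := Primrec.snd.comp Primrec.unpair
  obtain ⟨s₀, hs₀, hphi₀⟩ := exists_primrec_index (f := fun e k =>
    Part.some (Nat.pair 0 (if k.unpair.1 = e then k.unpair.2 else k.unpair.1)))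
    (Computable₂.partrec₂ (Primrec.to_comp (Primrec₂.natPair.comp (Primrec.const 0) (Primrec.ite
      (Primrec.eq.comp (hfst.comp Primrec.snd) Primrec.fst)
      (hsnd.comp Primrec.snd) (hfst.comp Primrec.snd)))))
  obtain ⟨s₁, hs₁, hphi₁⟩ := exists_primrec_index (f := fun (p : ℕ × ℕ × ℕ) k =>
    (phi p.2.1 (Nat.pair p.2.2 k.unpair.1)).bind (phi p.1))
    ((partrec₂_phi.comp (Computable.fst.comp (Computable.snd.comp Computable.fst))
      (Primrec₂.natPair.comp (Primrec.snd.comp (Primrec.snd.comp Primrec.fst))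
        (hfst.comp Primrec.snd)).to_comp).bind
      (partrec₂_phi.comp (Computable.fst.comp (Computable.fst.comp Computable.fst))
        Computable.snd).to₂)
  obtain ⟨s₂, hs₂, hphi₂⟩ := exists_primrec_index (f := fun (p : ℕ × ℕ) k =>
    Part.some (Nat.pair 1 (s₁ (p.1, p.2, k.unpair.2))))
    (Computable₂.partrec₂ (Primrec.to_comp (Primrec₂.natPair.comp (Primrec.const 1)
      (hs₁.comp (Primrec.pair (Primrec.fst.comp Primrec.fst)
        (Primrec.pair (Primrec.snd.comp Primrec.fst) (hsnd.comp Primrec.snd)))))))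
  let G (m a : ℕ) : ℕ :=
    if a.unpair.1 = 0 then Nat.pair 1 (s₀ a.unpair.2) else Nat.pair 1 (s₂ (m, a.unpair.2))
  have hG : Primrec₂ G := Primrec.ite (Primrec.eq.comp (hfst.comp Primrec.snd) (Primrec.const 0))
    (Primrec₂.natPair.comp (Primrec.const 1) (hs₀.comp (hsnd.comp Primrec.snd)))
    (Primrec₂.natPair.comp (Primrec.const 1)
      (hs₂.comp (Primrec.pair Primrec.fst (hsnd.comp Primrec.snd))))
  obtain ⟨m, hm⟩ := exists_index_phi_eq_some hG.to_comp
  refine ⟨G m, (hG.comp (Primrec.const m) Primrec.id).to_comp,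
    fun e => ⟨s₀ e, by simp [G], fun t s => ?_⟩,
    fun e => ⟨s₂ (m, e), by simp [G], fun t => ⟨s₁ (m, e, t), fun t' => ?_, fun s s' => ?_⟩⟩⟩
  · simp [hphi₀]
  · simp [hphi₂]
  · simp [hphi₁, hm, Part.bind_some_eq_map]

theorem iUnion_iInter_singleton_ite (e : ℕ) :
    ⋃ t, ⋂ s : ℕ, ({if t = e then s else t} : Set ℕ) = {e}ᶜ := by
  ext x
  simp only [Set.mem_iUnion, Set.mem_iInter, Set.mem_singleton_iff, Set.mem_compl_iff]
  refine ⟨fun ⟨t, ht⟩ hxe => ?_, fun hxe => ⟨x, fun _ => by simp [hxe]⟩⟩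
  by_cases hte : t = e
  · have h0 := ht 0
    have h1 := ht 1
    simp only [hte, if_true] at h0 h1
    omega
  · simp only [hte, if_false] at ht
    exact hte (ht 0 ▸ hxe)

/-- The coded family `{H_a | a ∈ I}` is uniformly closed under complementation: there is
a computable `u₂` with `u₂(a) ∈ I` and `H_{u₂(a)} = ℕ \ H_a` for all `a ∈ I`. -/
theorem exists_u2 :
    ∃ u₂ : ℕ → ℕ, Computable u₂ ∧
      ∀ a ∈ Iset, u₂ a ∈ Iset ∧ Hset (u₂ a) = (Hset a)ᶜ := by
  obtain ⟨u₂, hu₂, hzero, hone⟩ := exists_u2_spec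
  refine ⟨u₂, hu₂, Iset_induction (fun e => ?_) fun e v hv hvI => ?_⟩
  · obtain ⟨c, hc, hphi⟩ := hzero e
    simp_rw [hc, Hset_pair_one_of_mem hphi, Hset_pair_zero]
    exact ⟨pair_one_mem_Iset hphi fun _ _ => pair_zero_mem_Iset _, iUnion_iInter_singleton_ite e⟩
  · obtain ⟨c, hc, hphi⟩ := hone e
    choose d hd hphid using hphi
    have hmem : ∀ t s s', u₂ (v (Nat.pair t s)) ∈ phi (d t) (Nat.pair s s') := fun t s s' => by
      rw [hphid]; exact Part.mem_map _ (hv _)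
    rw [hc, Hset_pair_one_of_mem (g := fun _ t => Nat.pair 1 (d t)) fun t' t => hd t t',
      Hset_pair_one_of_mem (g := fun t s => v (Nat.pair t s)) fun t s => hv _]
    refine ⟨pair_one_mem_Iset (fun t' t => hd t t') fun t' t =>
      pair_one_mem_Iset (hmem t) fun _ _ => (hvI _).2.1, ?_⟩
    simp_rw [Hset_pair_one_of_mem (hmem _), (hvI _).2.2]
    simp only [Set.compl_iUnion, Set.compl_iInter, Set.iInter_const, Set.iUnion_const]
end
end

section
/- If Q ⊆ ℕ is a fixed point of Φ_ψ (i.e. Φ_ψ(Q) = Q) and P = {x : ℕ | ∃ a k, x = ⟨a,k⟩ ∧ ⟨a,x⟩ ∉ Q}, then there is no a* ∈ I with P = H_{a*}; in particular no fixed point of Φ_ψ can belong to a family of subsets of ℕ that contains P whenever it contains Q together with its recursive sections, which is the diagonal argument showing ψ has no hyperarithmetical fixed point. -/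
noncomputable section

/-!
For a fixed point `Q` of `Φ_ψ` and a code `a ∈ I`, the section `{x | ⟨a,x⟩ ∈ Q}` is exactly `H_a`:
`Hp ⊆ Q` because `Q` is closed under the clauses generating `Hp` (induction on `Hp`), and
`{x | ⟨a,x⟩ ∈ Q} ⊆ H_a` by induction on `a ∈ I`, unfolding `Q = Φ_ψ(Q)` once. The diagonal set
`P` differs from every such section at the point `⟨a,0⟩`, so it is no `H_a`.
-/

def diagonal (Q : Set ℕ) : Set ℕ := {x | ∃ a k, x = Nat.pair a k ∧ Nat.pair a x ∉ Q}

theorem pair_mem_diagonal_iff {Q : Set ℕ} {a k : ℕ} :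
    Nat.pair a k ∈ diagonal Q ↔ Nat.pair a (Nat.pair a k) ∉ Q := by
  constructor
  · rintro ⟨a', k', h, hQ⟩
    obtain ⟨rfl, rfl⟩ := Nat.pair_eq_pair.mp h
    exact hQ
  · exact fun h => ⟨a, k, rfl, h⟩

theorem diagonal_ne_section (Q : Set ℕ) (a : ℕ) : diagonal Q ≠ {x | Nat.pair a x ∈ Q} := by
  intro h
  have hmem : Nat.pair a 0 ∈ diagonal Q ↔ Nat.pair a (Nat.pair a 0) ∈ Q := by
    rw [h]
    rfl
  exact (iff_not_self (hmem.symm.trans pair_mem_diagonal_iff)).elim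

theorem pair_mem_of_mem_Hp {Q : Set ℕ} (hQ : PhiPsi Q ≤ Q) {p : ℕ × ℕ} (hp : p ∈ Hp) :
    Nat.pair p.1 p.2 ∈ Q := by
  refine OrderHom.lfp_le Psi1 (a := {p | Nat.pair p.1 p.2 ∈ Q}) (fun p hp => hQ ?_) hp
  rcases hp with ⟨e, he, hx⟩ | ⟨e, he, t, ht⟩
  · exact ⟨p.1, p.2, e, rfl, Or.inl ⟨he, hx⟩⟩
  · exact ⟨p.1, p.2, e, rfl, Or.inr ⟨he, t, ht⟩⟩

theorem mem_Hp_of_pair_mem {Q : Set ℕ} (hQ : Q ≤ PhiPsi Q) {b : ℕ} (hb : b ∈ Iset) :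
    ∀ x, Nat.pair b x ∈ Q → (b, x) ∈ Hp := by
  refine OrderHom.lfp_le Psi0 (a := {a | ∀ x, Nat.pair a x ∈ Q → (a, x) ∈ Hp})
    (fun a ha x hx => ?_) hb
  obtain ⟨a', x', e, hpair, hcase⟩ := hQ hx
  obtain ⟨rfl, rfl⟩ := Nat.pair_eq_pair.mp hpair
  rw [Hp, ← OrderHom.map_lfp]
  rcases hcase with ⟨he, hxe⟩ | ⟨he, t, ht⟩
  · exact Or.inl ⟨e, he, hxe⟩
  · refine Or.inr ⟨e, he, t, fun s => ?_⟩
    rcases ha with ⟨e', he'⟩ | ⟨e', he', hk⟩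
    · exact absurd (Nat.pair_eq_pair.mp (he'.symm.trans he)).1 zero_ne_one
    · obtain rfl := (Nat.pair_eq_pair.mp (he'.symm.trans he)).2
      obtain ⟨v, hv, hvQ⟩ := ht s
      obtain ⟨w, hw, hwQ⟩ := hk (Nat.pair t s)
      obtain rfl := Part.mem_unique hw hv
      exact ⟨w, hw, hwQ x hvQ⟩

theorem Hset_eq_section {Q : Set ℕ} (hQ : PhiPsi Q = Q) {a : ℕ} (ha : a ∈ Iset) :
    Hset a = {x | Nat.pair a x ∈ Q} :=
  Set.ext fun x => ⟨pair_mem_of_mem_Hp hQ.le, mem_Hp_of_pair_mem hQ.ge ha x⟩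

/-- Diagonal argument: if `Q` is a fixed point of `Φ_ψ` and
`P = {x | ∃ a k, x = ⟨a,k⟩ ∧ ⟨a,x⟩ ∉ Q}`, then `P ≠ H_{a*}` for every `a* ∈ I`. -/
theorem no_code_for_diagonal (Q : Set ℕ) (hQ : PhiPsi Q = Q) :
    ¬ ∃ a ∈ Iset,
      {x : ℕ | ∃ a' k, x = Nat.pair a' k ∧ Nat.pair a' x ∉ Q} = Hset a := by
  rintro ⟨a, ha, hP⟩
  exact diagonal_ne_section Q a (hP.trans (Hset_eq_section hQ ha))
end
end
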